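/- For any c ∈ ℝ², the set C' = { ‖x‖² · c + x : x ∈ ℝ², ‖x‖² ≤ 1 } ⊆ ℝ² is convex. -/

import Mathlib

/-!
The set is the projection of `{(y, t) | ‖y - t • c‖² ≤ t ≤ 1}`, which is convex because
`(y, t) ↦ ‖y - t • c‖² - t` is a convex function. A point `(y, t)` of this set projects into
the set of the theorem by the intermediate value theorem: `s ↦ ‖y - s • c‖² - s` is nonnegative
at `0` and nonpositive at `t`, and at a zero `s` the vector `x = y - s • c` has `‖x‖² = s`.
-/

open Matrix Set

variable {ι : Type*} [Fintype ι]

lemma dotProduct_self_nonneg (v : ι → ℝ) : 0 ≤ v ⬝ᵥ v :=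
  dotProduct_self_star_nonneg v

lemma convexOn_dotProduct_self : ConvexOn ℝ univ fun x : ι → ℝ => x ⬝ᵥ x := by
  refine ⟨convex_univ, fun x _ y _ a b ha hb hab => ?_⟩
  have gap : a * (x ⬝ᵥ x) + b * (y ⬝ᵥ y) - (a • x + b • y) ⬝ᵥ (a • x + b • y) =
      a * b * ((x - y) ⬝ᵥ (x - y)) := by
    obtain rfl : b = 1 - a := by linarith
    simp only [dotProduct, Finset.mul_sum]
    rw [← Finset.sum_add_distrib, ← Finset.sum_sub_distrib]
    refine Finset.sum_congr rfl fun i _ => ?_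
    simp only [Pi.add_apply, Pi.sub_apply, Pi.smul_apply, smul_eq_mul]
    ring
  have := mul_nonneg (mul_nonneg ha hb) (dotProduct_self_nonneg (x - y))
  simp only [smul_eq_mul]
  linarith

lemma exists_dotProduct_self_le_and_eq_smul_add {c y : ι → ℝ} {t : ℝ}
    (h : (y - t • c) ⬝ᵥ (y - t • c) ≤ t) :
    ∃ x : ι → ℝ, x ⬝ᵥ x ≤ t ∧ y = (x ⬝ᵥ x) • c + x := by
  set q : ℝ → ℝ := fun s => (y - s • c) ⬝ᵥ (y - s • c) - s
  have hq : Continuous q := by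
    simp only [q, dotProduct, Pi.sub_apply, Pi.smul_apply, smul_eq_mul]
    fun_prop
  have hq0 : 0 ≤ q 0 := by simpa [q] using dotProduct_self_nonneg y
  have hqt : q t ≤ 0 := by simpa [q] using h
  have ht : 0 ≤ t := (dotProduct_self_nonneg _).trans h
  obtain ⟨s, hs, hqs⟩ := intermediate_value_Icc' ht hq.continuousOn ⟨hqt, hq0⟩
  have hxs : (y - s • c) ⬝ᵥ (y - s • c) = s := sub_eq_zero.mp hqs
  exact ⟨y - s • c, hxs.le.trans hs.2, by rw [hxs, add_sub_cancel]⟩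

lemma convex_setOf_dotProduct_sub_smul_le (c : ι → ℝ) :
    Convex ℝ {p : (ι → ℝ) × ℝ | p.2 ≤ 1 ∧ (p.1 - p.2 • c) ⬝ᵥ (p.1 - p.2 • c) ≤ p.2} := by
  let L : (ι → ℝ) × ℝ →ₗ[ℝ] ι → ℝ := LinearMap.fst ℝ _ ℝ - (LinearMap.snd ℝ _ ℝ).smulRight c
  have hf : ConvexOn ℝ univ fun p => L p ⬝ᵥ L p - p.2 :=
    (convexOn_dotProduct_self.comp_linearMap L).sub ((LinearMap.snd ℝ _ ℝ).concaveOn convex_univ)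
  have hset : {p : (ι → ℝ) × ℝ | p.2 ≤ 1 ∧ (p.1 - p.2 • c) ⬝ᵥ (p.1 - p.2 • c) ≤ p.2} =
      {p | LinearMap.snd ℝ _ ℝ p ≤ 1} ∩ {p ∈ univ | L p ⬝ᵥ L p - p.2 ≤ 0} := by
    ext p
    simp [L]
  rw [hset]
  exact (convex_halfSpace_le (LinearMap.snd ℝ _ ℝ).isLinear 1).inter (hf.convex_le 0)

lemma setOf_eq_smul_add_eq_image_fst (c : ι → ℝ) :
    {y | ∃ x : ι → ℝ, x ⬝ᵥ x ≤ 1 ∧ y = (x ⬝ᵥ x) • c + x} =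
      LinearMap.fst ℝ _ ℝ ''
        {p : (ι → ℝ) × ℝ | p.2 ≤ 1 ∧ (p.1 - p.2 • c) ⬝ᵥ (p.1 - p.2 • c) ≤ p.2} := by
  ext y
  constructor
  · rintro ⟨x, hx, rfl⟩
    exact ⟨((x ⬝ᵥ x) • c + x, x ⬝ᵥ x), ⟨hx, by simp⟩, rfl⟩
  · rintro ⟨⟨y, t⟩, ⟨ht, h⟩, rfl⟩
    obtain ⟨x, hx, rfl⟩ := exists_dotProduct_self_le_and_eq_smul_add h
    exact ⟨x, hx.trans ht, rfl⟩

theorem stmt1 (c : Fin 2 → ℝ) :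
    Convex ℝ {y : Fin 2 → ℝ | ∃ x : Fin 2 → ℝ, x ⬝ᵥ x ≤ 1 ∧ y = (x ⬝ᵥ x) • c + x} := by
  rw [setOf_eq_smul_add_eq_image_fst]
  exact (convex_setOf_dotProduct_sub_smul_le c).linear_image _
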